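/- For vectors a, b in ℝ³ with 0 < ‖a‖ < ‖b‖, the Laplace Green's function G(a,b) = 1/(4π‖a−b‖) satisfies G(a,b) = (1/(4π)) · ∑_{n=0}^∞ (‖a‖ⁿ/‖b‖^{n+1}) · P_n(cos γ), where γ is the angle between a and b (i.e. cos γ = ⟪a,b⟫/(‖a‖‖b‖)) and P_n is the n-th Legendre polynomial. -/

import Mathlib

/-!
With `x = cos γ`, the generating function factors as
`(1 - 2xt + t²)^(-1/2) = (1 - t e^{iγ})^(-1/2) (1 - t e^{-iγ})^(-1/2)`, and the Cauchy product of
the two binomial series `∑ C(2n,n)/4ⁿ zⁿ = (1 - z)^(-1/2)` converges absolutely for `|t| < 1`.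
For small `t`, expanding `(1 - (2xt - t²))^(-1/2)` binomially and regrouping by powers of `t`
instead produces the explicit sum that Rodrigues' formula gives for `P_n(x)`. Uniqueness of
power series coefficients identifies the two expansions, so `∑ P_n(x) tⁿ = (1 - 2xt + t²)^(-1/2)`
for all `|t| < 1`. The multipole expansion is this identity at `t = ‖a‖/‖b‖`, since
`‖a - b‖ = ‖b‖ √(1 - 2xt + t²)`.
-/

open scoped RealInnerProductSpace

/-- Legendre polynomial via Rodrigues' formula. -/
noncomputable def legendre (n : ℕ) : Polynomial ℝ :=
  Polynomial.C (1 / (2 ^ n * (n.factorial : ℝ))) *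
    (Polynomial.derivative)^[n] ((Polynomial.X ^ 2 - 1) ^ n)

open Finset

section BinomialSeries

open Polynomial

theorem prod_range_inv_two_add (𝕂 : Type*) [Field 𝕂] [CharZero 𝕂] (n : ℕ) :
    ∏ j ∈ range n, ((2⁻¹ : 𝕂) + j) = n.factorial * (n.centralBinom / 4 ^ n) := by
  induction n with
  | zero => simp
  | succ n ih =>
    have h : ((n + 1 : ℕ) : 𝕂) * (n + 1).centralBinom = 2 * (2 * n + 1) * n.centralBinom := by
      exact_mod_cast Nat.succ_mul_centralBinom_succ n
    rw [prod_range_succ, ih, Nat.factorial_succ, pow_succ]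
    push_cast at h ⊢
    field_simp
    linear_combination (-2 * (n.factorial : 𝕂)) * h

theorem Ring.choose_inv_two_add_sub_one {𝕂 : Type*} [Field 𝕂] [CharZero 𝕂] (n : ℕ) :
    Ring.choose ((2⁻¹ : 𝕂) + n - 1) n = n.centralBinom / 4 ^ n := by
  rw [Ring.choose_eq_smul, ← aeval_eq_smeval, ← eval_map_algebraMap, descPochhammer_map,
    descPochhammer_eval_eq_prod_range, ← prod_range_reflect]
  have hreflect : ∏ j ∈ range n, ((2⁻¹ : 𝕂) + n - 1 - ((n - 1 - j : ℕ) : 𝕂)) =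
      ∏ j ∈ range n, ((2⁻¹ : 𝕂) + j) := by
    refine prod_congr rfl fun j hj ↦ ?_
    have hj : j < n := mem_range.1 hj
    rw [Nat.cast_sub (by omega), Nat.cast_sub (by omega)]
    push_cast
    ring
  rw [hreflect, prod_range_inv_two_add, smul_eq_mul, ← mul_assoc,
    inv_mul_cancel₀ (by simp [Nat.factorial_ne_zero]), one_mul]

theorem Complex.hasSum_centralBinom_div_mul_pow {z : ℂ} (hz : ‖z‖ < 1) :
    HasSum (fun n ↦ (n.centralBinom / 4 ^ n : ℂ) * z ^ n) (1 / (1 - z) ^ (2⁻¹ : ℂ)) := by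
  have := (one_div_one_sub_cpow_hasFPowerSeriesOnBall_zero 2⁻¹).hasSum (y := z)
    (by simpa [← ofReal_norm] using hz)
  simpa [FormalMultilinearSeries.ofScalars_apply_eq, Ring.choose_inv_two_add_sub_one, mul_comm]
    using this

theorem Real.hasSum_centralBinom_div_mul_pow {u : ℝ} (hu : |u| < 1) :
    HasSum (fun n ↦ (n.centralBinom / 4 ^ n : ℝ) * u ^ n) (√(1 - u))⁻¹ := by
  have := (one_div_one_sub_rpow_hasFPowerSeriesOnBall_zero 2⁻¹).hasSum (y := u)
    (by simpa [← ofReal_norm] using hu)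
  simpa [FormalMultilinearSeries.ofScalars_apply_eq, Ring.choose_inv_two_add_sub_one, mul_comm,
    Real.sqrt_eq_rpow] using this

end BinomialSeries

section CauchyProduct

open Complex

theorem HasSum.sum_antidiagonal_mul_of_summable_norm {R : Type*} [NormedRing R] [CompleteSpace R]
    {f g : ℕ → R} {a b : R} (hf : HasSum f a) (hg : HasSum g b)
    (hf' : Summable (‖f ·‖)) (hg' : Summable (‖g ·‖)) :
    HasSum (fun n ↦ ∑ kl ∈ antidiagonal n, f kl.1 * g kl.2) (a * b) := by
  rw [← hf.tsum_eq, ← hg.tsum_eq, tsum_mul_tsum_eq_tsum_sum_antidiagonal_of_summable_norm hf' hg']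
  exact (summable_norm_sum_mul_antidiagonal_of_summable_norm hf' hg').of_norm.hasSum

theorem Complex.cpow_inv_two_mul_conj_cpow_inv_two {z : ℂ} (hz : z.arg ≠ Real.pi) :
    z ^ (2⁻¹ : ℂ) * (starRingEnd ℂ z) ^ (2⁻¹ : ℂ) = ‖z‖ := by
  have hsq : (z ^ (2⁻¹ : ℂ)) ^ 2 = z := by simp
  rw [conj_cpow z _ hz, show (starRingEnd ℂ) (2⁻¹ : ℂ) = 2⁻¹ by simp [map_ofNat], mul_conj,
    normSq_eq_norm_sq, ← norm_pow, hsq]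

theorem Complex.norm_one_sub_ofReal_mul_exp (t γ : ℝ) :
    ‖1 - t * exp (γ * I)‖ = √(1 - 2 * Real.cos γ * t + t ^ 2) := by
  rw [norm_def, normSq_apply]
  congr 1
  simp only [sub_re, sub_im, one_re, one_im, re_ofReal_mul, im_ofReal_mul, exp_ofReal_mul_I_re,
    exp_ofReal_mul_I_im]
  linear_combination t ^ 2 * Real.sin_sq_add_cos_sq γ

theorem Complex.re_centralBinom_mul_pow_mul_conj_pow (t γ : ℝ) (k l : ℕ) :
    ((k.centralBinom / 4 ^ k : ℂ) * (t * exp (γ * I)) ^ k *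
      ((l.centralBinom / 4 ^ l : ℂ) * (starRingEnd ℂ (t * exp (γ * I))) ^ l)).re =
    (k.centralBinom / 4 ^ k : ℝ) * (l.centralBinom / 4 ^ l) * Real.cos ((k - l : ℝ) * γ) *
      t ^ (k + l) := by
  have hpow : (t * exp (γ * I)) ^ k * (starRingEnd ℂ (t * exp (γ * I))) ^ l =
      ((t ^ (k + l) : ℝ) : ℂ) * exp (((k - l : ℝ) * γ : ℝ) * I) := by
    rw [map_mul, conj_ofReal, ← exp_conj, map_mul, conj_ofReal, conj_I, mul_pow, mul_pow,
      ← exp_nat_mul, ← exp_nat_mul, pow_add]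
    push_cast
    rw [show ((k - l : ℂ) * γ * I) = k * (γ * I) + l * (γ * -I) by ring, exp_add]
    ring
  rw [mul_mul_mul_comm, hpow, ← mul_assoc,
    show (k.centralBinom / 4 ^ k : ℂ) * (l.centralBinom / 4 ^ l) * (t ^ (k + l) : ℝ) =
      ((k.centralBinom / 4 ^ k * (l.centralBinom / 4 ^ l) * t ^ (k + l) : ℝ) : ℂ) by
      push_cast; ring,
    re_ofReal_mul, exp_ofReal_mul_I_re]
  ring

theorem hasSum_sum_antidiagonal_cos_mul_pow (γ : ℝ) {t : ℝ} (ht : |t| < 1) :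
    HasSum (fun n ↦ (∑ p ∈ (antidiagonal n : Finset (ℕ × ℕ)), (p.1.centralBinom / 4 ^ p.1 : ℝ) *
        (p.2.centralBinom / 4 ^ p.2) * Real.cos ((p.1 - p.2 : ℝ) * γ)) * t ^ n)
      (√(1 - 2 * Real.cos γ * t + t ^ 2))⁻¹ := by
  set w : ℂ := t * exp (γ * I)
  have hw : ‖w‖ = |t| := by simp [w, norm_exp_ofReal_mul_I]
  have hwc : ‖starRingEnd ℂ w‖ = |t| := by rw [norm_conj, hw]
  have habs : Summable fun n ↦ (n.centralBinom / 4 ^ n : ℝ) * |t| ^ n :=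
    (Real.hasSum_centralBinom_div_mul_pow (by rwa [abs_abs])).summable
  have hnorm : ∀ v : ℂ, ‖v‖ = |t| →
      Summable fun n ↦ ‖(n.centralBinom / 4 ^ n : ℂ) * v ^ n‖ := fun v hv ↦
    habs.congr fun n ↦ by rw [norm_mul, norm_pow, hv, norm_div, norm_pow]; simp
  have harg : (1 - w).arg ≠ Real.pi := by
    have hlt : t * Real.cos γ < 1 := (le_abs_self _).trans_lt <| by
      rw [abs_mul]
      exact (mul_le_of_le_one_right (abs_nonneg t) (Real.abs_cos_le_one γ)).trans_lt ht
    refine fun h ↦ (arg_eq_pi_iff.1 h).1.not_ge ?_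
    simpa [w] using hlt.le
  have hprod := (hasSum_centralBinom_div_mul_pow (hw ▸ ht)).sum_antidiagonal_mul_of_summable_norm
    (hasSum_centralBinom_div_mul_pow (hwc ▸ ht)) (hnorm w hw) (hnorm _ hwc)
  rw [div_mul_div_comm, one_mul, show 1 - starRingEnd ℂ w = starRingEnd ℂ (1 - w) by simp,
    cpow_inv_two_mul_conj_cpow_inv_two harg, norm_one_sub_ofReal_mul_exp] at hprod
  convert hasSum_re hprod using 1
  · ext n
    simp only [re_sum, sum_mul]
    refine sum_congr rfl fun p hp ↦ ?_
    rw [← mem_antidiagonal.1 hp]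
    exact (re_centralBinom_mul_pow_mul_conj_pow t γ p.1 p.2).symm
  · simp

end CauchyProduct

section Fiberwise

variable {β γ : Type*} {φ : β → γ} {S : γ → Finset β}

theorem HasSum.sum_fiberwise_finset {α : Type*} [AddCommGroup α] [UniformSpace α]
    [IsUniformAddGroup α] [CompleteSpace α] [T2Space α]
    (hS : ∀ b c, b ∈ S c ↔ φ b = c) {f : β → α} {a : α} (hf : HasSum f a) :
    HasSum (fun c ↦ ∑ b ∈ S c, f b) a := by
  convert hf.tsum_fiberwise φ with c
  have hfiber : φ ⁻¹' {c} = ↑(S c) := by ext b; simp [hS]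
  rw [hfiber, Finset.tsum_subtype']

theorem summable_iff_summable_sum_fiberwise_finset (hS : ∀ b c, b ∈ S c ↔ φ b = c) {f : β → ℝ}
    (hf : 0 ≤ f) : Summable f ↔ Summable fun c ↦ ∑ b ∈ S c, f b := by
  rw [summable_partition hf (s := fun c ↦ ↑(S c))
    fun b ↦ ⟨φ b, by simp [hS], fun c h ↦ by simp_all⟩]
  simp only [Finset.tsum_subtype']
  exact and_iff_right fun c ↦ (S c).summable f

end Fiberwise

section Regrouping

open Polynomial

theorem Nat.centralBinom_add_mul_choose (k s : ℕ) :
    (k + s).centralBinom * (k + s).choose k =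
      (2 * k + s).choose k * (2 * (k + s)).choose (2 * k + s) := by
  rw [Nat.centralBinom_eq_two_mul_choose, Nat.choose_mul (Nat.le_add_right k s),
    mul_comm ((2 * k + s).choose k), Nat.choose_mul (show k ≤ 2 * k + s by omega)]
  congr 1
  exact Nat.choose_symm_of_eq_add (by omega)

theorem sum_antidiagonal_centralBinom_mul_choose (a b : ℝ) (n : ℕ) :
    ∑ p ∈ antidiagonal n, ((p.1 + p.2).centralBinom / 4 ^ (p.1 + p.2) : ℝ) *
      (p.1 + p.2).choose p.1 * a ^ p.1 * b ^ p.2 = n.centralBinom / 4 ^ n * (a + b) ^ n := by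
  rw [(Commute.all a b).add_pow', mul_sum]
  refine sum_congr rfl fun p hp ↦ ?_
  rw [mem_antidiagonal.1 hp, nsmul_eq_mul]
  ring

theorem hasSum_centralBinom_mul_choose_mul_pow {a b : ℝ} (hab : |a| + |b| < 1) :
    HasSum (fun p : ℕ × ℕ ↦ ((p.1 + p.2).centralBinom / 4 ^ (p.1 + p.2) : ℝ) *
      (p.1 + p.2).choose p.1 * a ^ p.1 * b ^ p.2) (√(1 - (a + b)))⁻¹ := by
  have hS : ∀ (p : ℕ × ℕ) (n : ℕ), p ∈ antidiagonal n ↔ p.1 + p.2 = n := fun _ _ ↦ mem_antidiagonal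
  have habs : Summable fun p : ℕ × ℕ ↦ ((p.1 + p.2).centralBinom / 4 ^ (p.1 + p.2) : ℝ) *
      (p.1 + p.2).choose p.1 * |a| ^ p.1 * |b| ^ p.2 := by
    rw [summable_iff_summable_sum_fiberwise_finset hS (fun p ↦ by positivity)]
    simp only [sum_antidiagonal_centralBinom_mul_choose]
    exact (Real.hasSum_centralBinom_div_mul_pow (by rwa [abs_of_nonneg (by positivity)])).summable
  have hsum : Summable fun p : ℕ × ℕ ↦ ((p.1 + p.2).centralBinom / 4 ^ (p.1 + p.2) : ℝ) *
      (p.1 + p.2).choose p.1 * a ^ p.1 * b ^ p.2 :=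
    habs.of_norm_bounded fun p ↦ by simp
  have hrows := hsum.hasSum.sum_fiberwise_finset hS
  simp only [sum_antidiagonal_centralBinom_mul_choose] at hrows
  rw [← hrows.unique (Real.hasSum_centralBinom_div_mul_pow ((abs_add_le a b).trans_lt hab))]
  exact hsum.hasSum

theorem legendre_eq_sum (m : ℕ) :
    legendre m = ∑ k ∈ range (m / 2 + 1),
      C ((-1) ^ k * m.choose k * (2 * (m - k)).choose m / 2 ^ m : ℝ) * X ^ (m - 2 * k) := by
  have hterm : ∀ k, C (1 / (2 ^ m * m.factorial : ℝ)) *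
      derivative^[m] ((-1) ^ k * (X ^ 2) ^ (m - k) * (m.choose k : ℝ[X])) =
      C ((-1) ^ k * m.choose k * (2 * (m - k)).choose m / 2 ^ m : ℝ) * X ^ (m - 2 * k) := by
    intro k
    rw [show (-1 : ℝ[X]) ^ k * (X ^ 2) ^ (m - k) * (m.choose k : ℝ[X]) =
        C ((-1) ^ k * m.choose k : ℝ) * X ^ (2 * (m - k)) by simp [← pow_mul]; ring,
      iterate_derivative_C_mul, iterate_derivative_X_pow_eq_C_mul,
      Nat.descFactorial_eq_factorial_mul_choose, show 2 * (m - k) - m = m - 2 * k by omega,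
      ← mul_assoc, ← mul_assoc, ← C_mul, ← C_mul]
    congr 2
    field_simp
    push_cast
    ring
  rw [legendre, show (X : ℝ[X]) ^ 2 - 1 = -1 + X ^ 2 by ring, add_pow, iterate_derivative_sum,
    mul_sum]
  simp_rw [hterm]
  refine (sum_subset (range_subset_range.2 (by omega)) fun k hk hk' ↦ ?_).symm
  simp only [mem_range, not_lt] at hk hk'
  simp [Nat.choose_eq_zero_of_lt (show 2 * (m - k) < m by omega)]

theorem hasSum_legendre_eval_mul_pow_of_small {x t : ℝ} (h : t ^ 2 + 2 * |x| * |t| < 1) :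
    HasSum (fun m ↦ (legendre m).eval x * t ^ m) (√(1 - 2 * x * t + t ^ 2))⁻¹ := by
  have hser := hasSum_centralBinom_mul_choose_mul_pow (a := -t ^ 2) (b := 2 * x * t)
    (by simpa [abs_mul, mul_assoc] using h)
  rw [show 1 - (-t ^ 2 + 2 * x * t) = 1 - 2 * x * t + t ^ 2 by ring] at hser
  -- the term indexed by `(k, s)` is a multiple of `t ^ (2 * k + s)`, so regroup along `2 * k + s`
  have hS : ∀ (p : ℕ × ℕ) (m : ℕ), p ∈ (range (m / 2 + 1)).map
      ⟨fun k ↦ (k, m - 2 * k), Function.LeftInverse.injective (g := Prod.fst) fun _ ↦ rfl⟩ ↔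
        2 * p.1 + p.2 = m := by
    rintro ⟨k, s⟩ m
    simp only [mem_map, mem_range]
    show (∃ a < m / 2 + 1, (a, m - 2 * a) = (k, s)) ↔ _
    simp only [Prod.mk.injEq]
    constructor
    · rintro ⟨k, hk, rfl, rfl⟩
      omega
    · exact fun h ↦ ⟨k, by omega, rfl, by omega⟩
  refine (hser.sum_fiberwise_finset hS).congr_fun fun m ↦ ?_
  rw [sum_map, legendre_eq_sum, eval_finsetSum, sum_mul]
  simp only [Function.Embedding.coeFn_mk]
  refine sum_congr rfl fun k hk ↦ ?_
  obtain ⟨s, rfl⟩ : ∃ s, m = 2 * k + s := ⟨m - 2 * k, by simp at hk; omega⟩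
  have key : ((k + s).centralBinom * (k + s).choose k : ℝ) =
      (2 * k + s).choose k * (2 * (k + s)).choose (2 * k + s) := by
    exact_mod_cast Nat.centralBinom_add_mul_choose k s
  have h4 : (4 : ℝ) ^ (k + s) = 2 ^ (2 * k + s) * 2 ^ s := by
    rw [← pow_add, show (4 : ℝ) = 2 ^ 2 by norm_num, ← pow_mul]
    ring_nf
  simp only [eval_mul, eval_C, eval_pow, eval_X, show 2 * k + s - 2 * k = s by omega,
    show 2 * k + s - k = k + s by omega]
  rw [mul_assoc ((-1 : ℝ) ^ k), ← key, h4]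
  field_simp
  ring

end Regrouping

section Uniqueness

open FormalMultilinearSeries
open scoped NNReal

theorem hasFPowerSeriesOnBall_ofScalars_of_hasSum {𝕜 : Type*} [RCLike 𝕜]
    {a : ℕ → 𝕜} {f : 𝕜 → 𝕜} {r : ℝ≥0} (hr : 0 < r)
    (h : ∀ t : 𝕜, ‖t‖ < r → HasSum (fun n ↦ a n * t ^ n) (f t)) :
    HasFPowerSeriesOnBall f (ofScalars 𝕜 a) 0 r where
  r_le := ENNReal.le_of_forall_nnreal_lt fun r' hr' ↦ by
    refine (ofScalars 𝕜 a).le_radius_of_tendsto (l := 0) ?_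
    have := (h ((r' : ℝ) : 𝕜) ?_).summable.tendsto_atTop_zero.norm
    · simpa [ofScalars_norm, norm_mul] using this
    · simpa using hr'
  r_pos := by simpa using hr
  hasSum := fun {y} hy ↦ by
    simpa [ofScalars_apply_eq, mul_comm] using h y (by simpa using hy)

theorem eq_of_forall_hasSum_mul_pow {𝕜 : Type*} [RCLike 𝕜]
    {a b : ℕ → 𝕜} {f : 𝕜 → 𝕜} {r : ℝ≥0} (hr : 0 < r)
    (ha : ∀ t : 𝕜, ‖t‖ < r → HasSum (fun n ↦ a n * t ^ n) (f t))
    (hb : ∀ t : 𝕜, ‖t‖ < r → HasSum (fun n ↦ b n * t ^ n) (f t)) : a = b :=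
  ofScalars_series_injective 𝕜 𝕜 <|
    (hasFPowerSeriesOnBall_ofScalars_of_hasSum hr ha).hasFPowerSeriesAt.eq_formalMultilinearSeries
      (hasFPowerSeriesOnBall_ofScalars_of_hasSum hr hb).hasFPowerSeriesAt

end Uniqueness

theorem hasSum_legendre_eval_mul_pow {x t : ℝ} (hx : |x| ≤ 1) (ht : |t| < 1) :
    HasSum (fun n ↦ (legendre n).eval x * t ^ n) (√(1 - 2 * x * t + t ^ 2))⁻¹ := by
  obtain ⟨γ, rfl⟩ : ∃ γ, Real.cos γ = x :=
    ⟨Real.arccos x, Real.cos_arccos (abs_le.1 hx).1 (abs_le.1 hx).2⟩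
  have hcoeff : (fun n ↦ (legendre n).eval (Real.cos γ)) = fun n ↦
      ∑ p ∈ (antidiagonal n : Finset (ℕ × ℕ)), (p.1.centralBinom / 4 ^ p.1 : ℝ) *
        (p.2.centralBinom / 4 ^ p.2) * Real.cos ((p.1 - p.2 : ℝ) * γ) := by
    refine eq_of_forall_hasSum_mul_pow (r := 4⁻¹) (by norm_num) (fun τ hτ ↦ ?_) fun τ hτ ↦
      hasSum_sum_antidiagonal_cos_mul_pow γ (by simp at hτ; linarith)
    refine hasSum_legendre_eval_mul_pow_of_small ?_
    simp only [Real.norm_eq_abs, NNReal.coe_inv, NNReal.coe_ofNat] at hτ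
    nlinarith [abs_nonneg τ, abs_nonneg (Real.cos γ), sq_abs τ]
  exact (hasSum_sum_antidiagonal_cos_mul_pow γ ht).congr_fun fun n ↦ by rw [congrFun hcoeff n]

theorem norm_sub_eq_norm_mul_sqrt {E : Type*} [NormedAddCommGroup E] [InnerProductSpace ℝ E]
    {a b : E} (ha : a ≠ 0) (hb : b ≠ 0) :
    ‖a - b‖ = ‖b‖ * √(1 - 2 * (⟪a, b⟫ / (‖a‖ * ‖b‖)) * (‖a‖ / ‖b‖) + (‖a‖ / ‖b‖) ^ 2) := by
  set x := ⟪a, b⟫ / (‖a‖ * ‖b‖)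
  set t := ‖a‖ / ‖b‖
  calc ‖a - b‖ = √(‖a - b‖ ^ 2) := (Real.sqrt_sq (norm_nonneg _)).symm
    _ = √(‖b‖ ^ 2 * (1 - 2 * x * t + t ^ 2)) := by
      rw [norm_sub_sq_real]
      congr 1
      simp only [x, t]
      field_simp [norm_ne_zero_iff.2 ha, norm_ne_zero_iff.2 hb]
      ring
    _ = ‖b‖ * √(1 - 2 * x * t + t ^ 2) := by
      rw [Real.sqrt_mul (sq_nonneg _), Real.sqrt_sq (norm_nonneg _)]

theorem laplace_multipole_expansion
    (a b : EuclideanSpace ℝ (Fin 3)) (ha : 0 < ‖a‖) (hab : ‖a‖ < ‖b‖) :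
    HasSum
      (fun n : ℕ =>
        (1 / (4 * Real.pi)) * (‖a‖ ^ n / ‖b‖ ^ (n + 1)) *
          (legendre n).eval (⟪a, b⟫ / (‖a‖ * ‖b‖)))
      (1 / (4 * Real.pi * ‖a - b‖)) := by
  have hb : 0 < ‖b‖ := ha.trans hab
  set x := ⟪a, b⟫ / (‖a‖ * ‖b‖)
  set t := ‖a‖ / ‖b‖ with ht_def
  have hx : |x| ≤ 1 := abs_real_inner_div_norm_mul_norm_le_one a b
  have ht : |t| < 1 := by
    rw [abs_of_nonneg (by positivity)]
    exact (div_lt_one hb).2 hab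
  rw [norm_sub_eq_norm_mul_sqrt (norm_pos_iff.1 ha) (norm_pos_iff.1 hb),
    show 1 / (4 * Real.pi * (‖b‖ * √(1 - 2 * x * t + t ^ 2))) =
      1 / (4 * Real.pi * ‖b‖) * (√(1 - 2 * x * t + t ^ 2))⁻¹ by ring]
  refine ((hasSum_legendre_eval_mul_pow hx ht).mul_left _).congr_fun fun n ↦ ?_
  rw [ht_def, div_pow]
  ring
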